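/- arXiv:2603.08959 — 4 statements merged into one kernel-verified Lean document; each statement's English description precedes it below -/
import Mathlib

section
/- Let a_1,...,a_n > 0 with sum 1 and partial sums S_i. For every positive integer k, ∑_{i=1}^n a_i · (1 - S_i^k) ≤ k/(k+1). -/
/-!
Since `1 - t ^ k` is decreasing on `[0, 1]`, the term `a i * (1 - S i ^ k)` is a right-endpoint
rectangle under its graph over `[S (i - 1), S i]`, hence at most the integral there. Summing, the
left side is at most `∫ t in 0..1, 1 - t ^ k = k / (k + 1)`. With the antiderivative
`t - t ^ (k + 1) / (k + 1)` each comparison is the tangent bound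
`x ^ (k + 1) - y ^ (k + 1) ≤ (k + 1) * (x - y) * x ^ k` for `0 ≤ y ≤ x`, and the sum telescopes.
-/

open Finset

lemma sub_mul_one_sub_pow_le {x y : ℝ} (hy : 0 ≤ y) (hyx : y ≤ x) (k : ℕ) :
    (x - y) * (1 - x ^ k) ≤ (x - x ^ (k + 1) / (k + 1)) - (y - y ^ (k + 1) / (k + 1)) := by
  have hpow : x ^ (k + 1) - y ^ (k + 1) ≤ (x - y) * (k + 1) * x ^ k := by
    have h := abs_pow_sub_pow_le x y (k + 1)
    rwa [abs_of_nonneg (sub_nonneg.2 (pow_le_pow_left₀ hy hyx _)), abs_of_nonneg (sub_nonneg.2 hyx),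
      max_eq_left (by rwa [abs_of_nonneg hy, abs_of_nonneg (hy.trans hyx)]),
      abs_of_nonneg (hy.trans hyx), Nat.add_sub_cancel, Nat.cast_succ] at h
  have hk_pos : (0 : ℝ) < k + 1 := by positivity
  have hdiv : x ^ (k + 1) / (k + 1) - y ^ (k + 1) / (k + 1) ≤ (x - y) * x ^ k := by
    rw [← sub_div, div_le_iff₀ hk_pos]; linarith
  linarith

lemma sum_sub_mul_one_sub_pow_le {s : ℕ → ℝ} {n : ℕ} (hs_nonneg : ∀ i < n, 0 ≤ s i)
    (hs_mono : ∀ i < n, s i ≤ s (i + 1)) (k : ℕ) :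
    ∑ i ∈ range n, (s (i + 1) - s i) * (1 - s (i + 1) ^ k)
      ≤ (s n - s n ^ (k + 1) / (k + 1)) - (s 0 - s 0 ^ (k + 1) / (k + 1)) := by
  rw [← sum_range_sub (fun i => s i - s i ^ (k + 1) / (k + 1))]
  refine sum_le_sum fun i hi => ?_
  rw [mem_range] at hi
  exact sub_mul_one_sub_pow_le (hs_nonneg i hi) (hs_mono i hi) k

theorem poly_inequality_general (n : ℕ) (a : ℕ → ℝ)
    (ha : ∀ i < n, 0 < a i) (hsum : ∑ i ∈ Finset.range n, a i = 1)
    (k : ℕ) :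
    ∑ i ∈ Finset.range n, a i * (1 - (∑ j ∈ Finset.range (i + 1), a j) ^ k)
      ≤ (k : ℝ) / (k + 1) := by
  have hnonneg : ∀ i < n, 0 ≤ ∑ j ∈ range i, a j := fun i hi =>
    sum_nonneg fun j hj => (ha j ((mem_range.1 hj).trans hi)).le
  have hmono : ∀ i < n, ∑ j ∈ range i, a j ≤ ∑ j ∈ range (i + 1), a j := fun i hi => by
    rw [sum_range_succ]; linarith [ha i hi]
  have h := sum_sub_mul_one_sub_pow_le hnonneg hmono k
  simp only [sum_range_succ_sub_sum, hsum, sum_range_zero] at h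
  convert h using 1
  field_simp
  simp

theorem poly_inequality (n : ℕ) (a : ℕ → ℝ)
    (ha : ∀ i < n, 0 < a i) (hsum : ∑ i ∈ Finset.range n, a i = 1)
    (k : ℕ) (hk : 0 < k) :
    ∑ i ∈ Finset.range n, a i * (1 - (∑ j ∈ Finset.range (i + 1), a j) ^ k)
      ≤ (k : ℝ) / (k + 1) :=
  poly_inequality_general n a ha hsum k
end

section
/- Let a_1,...,a_n > 0 with sum 1 and partial sums S_i, with n ≥ 2. For every positive integer k, the inequality ∑_{i=1}^n a_i · (1 - S_i^k) < k/(k+1) is strict. -/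
open Finset

/-! The sum is `1 - ∑ aᵢ Sᵢ^k`, and `∑ aᵢ Sᵢ^k` is a right-endpoint Riemann sum of `x ↦ x^k`
over the partition `0 = S₀ < S₁ < ⋯ < Sₙ = 1` of `[0, 1]`. Since `x ↦ x^(k+1)` is strictly convex,
each increment `Sᵢ₊₁^(k+1) - Sᵢ^(k+1)` is strictly less than `(k+1) Sᵢ₊₁^k aᵢ`; telescoping gives
`1 < (k+1) ∑ aᵢ Sᵢ^k`, which is the claim. -/

lemma pow_succ_sub_pow_succ_lt {k : ℕ} (hk : k ≠ 0) {x y : ℝ} (hy : 0 ≤ y) (hyx : y < x) :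
    x ^ (k + 1) - y ^ (k + 1) < (k + 1) * ((x - y) * x ^ k) := by
  have h := (strictConvexOn_pow (n := k + 1) (by omega)).slope_lt_of_hasDerivAt hy
    (hy.trans hyx.le) hyx (hasDerivAt_pow (k + 1) x)
  rw [slope_def_field, div_lt_iff₀ (sub_pos.2 hyx), Nat.cast_succ, Nat.add_sub_cancel] at h
  linarith

lemma sum_pow_succ_lt_mul_sum_mul_partialSum_pow {n k : ℕ} (hn : n ≠ 0) (hk : k ≠ 0)
    {a : ℕ → ℝ} (ha : ∀ i < n, 0 < a i) :
    (∑ i ∈ range n, a i) ^ (k + 1)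
      < (k + 1) * ∑ i ∈ range n, a i * (∑ j ∈ range (i + 1), a j) ^ k := by
  set S : ℕ → ℝ := fun i => ∑ j ∈ range i, a j
  have hS_succ (i : ℕ) : S (i + 1) = S i + a i := sum_range_succ a i
  have hS_nonneg {i : ℕ} (hi : i < n) : 0 ≤ S i :=
    sum_nonneg fun j hj => (ha j ((mem_range.1 hj).trans hi)).le
  calc (∑ i ∈ range n, a i) ^ (k + 1)
      = ∑ i ∈ range n, (S (i + 1) ^ (k + 1) - S i ^ (k + 1)) := by
        rw [sum_range_sub (fun i => S i ^ (k + 1))]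
        simp [S]
    _ < ∑ i ∈ range n, (k + 1) * (a i * S (i + 1) ^ k) := by
        refine sum_lt_sum_of_nonempty (nonempty_range_iff.2 hn) fun i hi => ?_
        rw [mem_range] at hi
        have h := pow_succ_sub_pow_succ_lt hk (hS_nonneg hi) (lt_add_of_pos_right _ (ha i hi))
        rwa [add_sub_cancel_left, ← hS_succ] at h
    _ = (k + 1) * ∑ i ∈ range n, a i * S (i + 1) ^ k := (mul_sum _ _ _).symm

theorem poly_inequality_strict_general (n : ℕ) (a : ℕ → ℝ)
    (ha : ∀ i < n, 0 < a i) (hsum : ∑ i ∈ Finset.range n, a i = 1)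
    (k : ℕ) (hk : 0 < k) :
    ∑ i ∈ Finset.range n, a i * (1 - (∑ j ∈ Finset.range (i + 1), a j) ^ k)
      < (k : ℝ) / (k + 1) := by
  have hn₀ : n ≠ 0 := by
    rintro rfl
    simp at hsum
  have key := sum_pow_succ_lt_mul_sum_mul_partialSum_pow hn₀ hk.ne' ha
  rw [hsum, one_pow] at key
  simp only [mul_sub, mul_one, sum_sub_distrib, hsum]
  rw [lt_div_iff₀ (by positivity)]
  linarith

theorem poly_inequality_strict (n : ℕ) (hn : 2 ≤ n) (a : ℕ → ℝ)
    (ha : ∀ i < n, 0 < a i) (hsum : ∑ i ∈ Finset.range n, a i = 1)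
    (k : ℕ) (hk : 0 < k) :
    ∑ i ∈ Finset.range n, a i * (1 - (∑ j ∈ Finset.range (i + 1), a j) ^ k)
      < (k : ℝ) / (k + 1) :=
  poly_inequality_strict_general n a ha hsum k hk
end

section
/- Let a_1,...,a_n > 0 sum to 1 with partial sums S_i. Then ∑_{i=1}^n a_i · ln(2 - S_i) ≤ 2·ln 2 - 1. -/
/-!
With `S_i = a_0 + ⋯ + a_i`, the sum `∑ a_i ln(2 - S_i)` is a right Riemann sum of the decreasing
function `ln(2 - x)` on `[0, 1]`, hence at most `∫₀¹ ln(2 - x) dx = 2 ln 2 - 1`. Rather than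
integrating, each term is bounded by the increment of the antiderivative
`F x = (2 - x) - (2 - x) ln(2 - x)`, which is the tangent-line inequality for the convex function
`x ln x - x`, and the increments telescope to `F 1 - F 0`.
-/

open Finset Real

lemma sum_mul_apply_partialSum_le {n : ℕ} {a : ℕ → ℝ} (ha : ∀ i < n, 0 ≤ a i) {g F : ℝ → ℝ}
    (hstep : ∀ s t, 0 ≤ s → s ≤ t → t ≤ ∑ i ∈ range n, a i → (t - s) * g t ≤ F t - F s) :
    ∑ i ∈ range n, a i * g (∑ j ∈ range (i + 1), a j) ≤ F (∑ i ∈ range n, a i) - F 0 := by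
  set S : ℕ → ℝ := fun i ↦ ∑ j ∈ range i, a j
  have hS_mono : ∀ i j, i ≤ j → j ≤ n → S i ≤ S j := fun i j hij hjn ↦
    sum_le_sum_of_subset_of_nonneg (range_subset_range.2 hij)
      fun k hk _ ↦ ha k ((mem_range.1 hk).trans_le hjn)
  calc ∑ i ∈ range n, a i * g (S (i + 1))
      ≤ ∑ i ∈ range n, (F (S (i + 1)) - F (S i)) := by
        refine sum_le_sum fun i hi ↦ ?_
        have hin := mem_range.1 hi
        have hincr : S (i + 1) - S i = a i := by simp [S, sum_range_succ]
        rw [← hincr]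
        exact hstep _ _ (sum_nonneg fun j hj ↦ ha j ((mem_range.1 hj).trans hin))
          (hS_mono i (i + 1) i.le_succ hin) (hS_mono (i + 1) n hin le_rfl)
    _ = F (S n) - F 0 := by rw [sum_range_sub (fun i ↦ F (S i))]; simp [S]

lemma sub_mul_log_le_of_pos {u v : ℝ} (hu : 0 < u) (hv : 0 < v) :
    (u - v) * log v ≤ (u * log u - u) - (v * log v - v) := by
  have h := mul_le_mul_of_nonneg_left (log_le_sub_one_of_pos (div_pos hv hu)) hu.le
  rw [log_div hv.ne' hu.ne', mul_sub_one, mul_div_cancel₀ v hu.ne'] at h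
  linarith

theorem log_inequality (n : ℕ) (a : ℕ → ℝ)
    (ha : ∀ i < n, 0 < a i) (hsum : ∑ i ∈ Finset.range n, a i = 1) :
    ∑ i ∈ Finset.range n, a i * Real.log (2 - ∑ j ∈ Finset.range (i + 1), a j)
      ≤ 2 * Real.log 2 - 1 := by
  set F : ℝ → ℝ := fun x ↦ (2 - x) - (2 - x) * log (2 - x)
  have hstep : ∀ s t, 0 ≤ s → s ≤ t → t ≤ ∑ i ∈ range n, a i →
      (t - s) * log (2 - t) ≤ F t - F s := by
    intro s t hs hst ht
    have h := sub_mul_log_le_of_pos (u := 2 - s) (v := 2 - t) (by linarith) (by linarith)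
    simp only [F]
    linarith
  calc ∑ i ∈ range n, a i * log (2 - ∑ j ∈ range (i + 1), a j)
      ≤ F (∑ i ∈ range n, a i) - F 0 :=
        sum_mul_apply_partialSum_le (fun i hi ↦ (ha i hi).le) hstep
    _ = 2 * log 2 - 1 := by norm_num [F, hsum]; ring
end

section
/- Let a_1,...,a_n > 0 sum to 1 with partial sums S_i. Then ∑_{i=1}^n a_i · cos(π S_i / 2) ≤ 2/π. -/
open Finset Real Set

/-! Between consecutive partial sums `S i ≤ S (i + 1)` the decreasing function `cos (π x / 2)`
stays above its value at the right endpoint, so `a i * cos (π S (i + 1) / 2)` is the area of a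
rectangle under its graph. These intervals tile `[0, 1]`, hence the sum is at most
`∫₀¹ cos (π x / 2) dx = 2 / π`. -/

theorem AntitoneOn.sub_mul_le_intervalIntegral {g : ℝ → ℝ} {x y : ℝ} (hxy : x ≤ y)
    (hg : AntitoneOn g (Icc x y)) : (y - x) * g y ≤ ∫ t in x..y, g t := by
  have hint : IntervalIntegrable g MeasureTheory.volume x y :=
    (hg.mono (by rw [uIcc_of_le hxy])).intervalIntegrable
  calc (y - x) * g y = ∫ _ in x..y, g y := by simp
    _ ≤ ∫ t in x..y, g t :=
      intervalIntegral.integral_mono_on hxy intervalIntegrable_const hint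
        fun t ht => hg ht ⟨hxy, le_rfl⟩ ht.2

theorem AntitoneOn.sum_mul_partialSum_le_intervalIntegral {g : ℝ → ℝ} {a : ℕ → ℝ} {n : ℕ}
    (ha : ∀ i < n, 0 ≤ a i) (hg : AntitoneOn g (Icc 0 (∑ i ∈ range n, a i))) :
    ∑ i ∈ range n, a i * g (∑ j ∈ range (i + 1), a j)
      ≤ ∫ t in 0..∑ i ∈ range n, a i, g t := by
  induction n with
  | zero => simp
  | succ n ih =>
    set T := ∑ i ∈ range n, a i
    have hT : 0 ≤ T := sum_nonneg fun i hi => ha i (Nat.lt_succ_of_lt (mem_range.1 hi))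
    have hstep : ∑ i ∈ range (n + 1), a i = T + a n := sum_range_succ a n
    have han : 0 ≤ a n := ha n n.lt_succ_self
    rw [hstep] at hg ⊢
    have hleft := hg.mono (Icc_subset_Icc_right (le_add_of_nonneg_right han))
    have hright := hg.mono (Icc_subset_Icc_left hT)
    have hlast := hright.sub_mul_le_intervalIntegral (le_add_of_nonneg_right han)
    rw [add_sub_cancel_left] at hlast
    rw [sum_range_succ, ← intervalIntegral.integral_add_adjacent_intervals
      (hleft.mono (by rw [uIcc_of_le hT])).intervalIntegrable
      (hright.mono (by rw [uIcc_of_le (le_add_of_nonneg_right han)])).intervalIntegrable]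
    exact add_le_add (ih (fun i hi => ha i (Nat.lt_succ_of_lt hi)) hleft) (by rwa [hstep])

theorem integral_cos_pi_mul_div_two : ∫ x in (0 : ℝ)..1, cos (π * x / 2) = 2 / π := by
  have hderiv : ∀ x ∈ uIcc (0 : ℝ) 1,
      HasDerivAt (fun x => 2 / π * sin (π * x / 2)) (cos (π * x / 2)) x := by
    intro x _
    refine ((((hasDerivAt_id' x).const_mul π).div_const 2).sin.const_mul (2 / π)).congr_deriv ?_
    field_simp
  have hcont : Continuous fun x => cos (π * x / 2) := by fun_prop
  rw [intervalIntegral.integral_eq_sub_of_hasDerivAt hderiv (hcont.intervalIntegrable 0 1)]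
  simp

theorem antitoneOn_cos_pi_mul_div_two : AntitoneOn (fun x => cos (π * x / 2)) (Icc 0 1) := by
  intro x hx y hy hxy
  apply cos_le_cos_of_nonneg_of_le_pi <;> nlinarith [pi_pos, hx.1, hy.2]

theorem cos_inequality (n : ℕ) (a : ℕ → ℝ)
    (ha : ∀ i < n, 0 < a i) (hsum : ∑ i ∈ Finset.range n, a i = 1) :
    ∑ i ∈ Finset.range n, a i * Real.cos (π * (∑ j ∈ Finset.range (i + 1), a j) / 2)
      ≤ 2 / π := by
  have hg : AntitoneOn (fun x => cos (π * x / 2)) (Icc 0 (∑ i ∈ range n, a i)) :=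
    hsum ▸ antitoneOn_cos_pi_mul_div_two
  have h := hg.sum_mul_partialSum_le_intervalIntegral fun i hi => (ha i hi).le
  rwa [hsum, integral_cos_pi_mul_div_two] at h
end
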